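/- arXiv:1405.7147 — 4 statements merged into one kernel-verified Lean document; each statement's English description precedes it below -/
import Mathlib

section
/- Let R be a commutative ring with identity, let k be a positive integer and let p = 4k+1 be prime. For all a, b, c in R, the quadratic residue circulant matrix satisfies Q_p(a,b,c) · Q_p(a,b,c)^T = Q_p( a² + 2k(b² + c²), 2ab − b² + k(b+c)², 2ac − c² + k(b+c)² ). -/
/-! The matrix `Q_p(a,b,c)` is the circulant of `g = c + (a - c) δ₀ + (b - c) 1_Q`, where `1_Q` is
the indicator of the nonzero squares, and it is symmetric because `-1` is a square mod `p`. So
`Q Qᵀ` is the circulant of the self-convolution of `g`, which expands into the number `(p - 1)/2`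
of nonzero squares and the counts `#{x | x and d - x are nonzero squares}`. Writing
`2 · 1_Q = 1 - δ₀ + χ` with `χ` the quadratic character turns these counts into character sums;
the only nontrivial one is the Jacobi sum `∑ x, χ x χ (1 - x) = -χ (-1)`. -/

noncomputable section

open Matrix
open scoped Classical

/-- The quadratic residue circulant matrix `Q_p(a,b,c)`: the `p × p` circulant matrix
(indexed by `ZMod p`) whose `(i,j)` entry is `a` if `j - i = 0`, `b` if `j - i` is a
nonzero quadratic residue modulo `p`, and `c` if `j - i` is a quadratic non-residue. -/
def Qcirc {R : Type*} [CommRing R] (p : ℕ) (a b c : R) :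
    Matrix (ZMod p) (ZMod p) R :=
  Matrix.of fun i j =>
    if j - i = 0 then a else if IsSquare (j - i) then b else c

open Finset

section Convolution

variable {G R : Type*} [AddCommGroup G] [Fintype G] [DecidableEq G] [CommRing R]

theorem circulant_mulVec_self_apply_of_eq {g e : G → R} {c α β : R}
    (hg : ∀ x, g x = c + α * (if x = 0 then 1 else 0) + β * e x) (d : G) :
    (circulant g *ᵥ g) d = Fintype.card G * c ^ 2 + 2 * c * α + 2 * c * β * ∑ x, e x
      + α ^ 2 * (if d = 0 then 1 else 0) + 2 * α * β * e d
      + β ^ 2 * ∑ x, e (d - x) * e x := by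
  have hshift : ∑ x, e (d - x) = ∑ x, e x :=
    Fintype.sum_equiv (Equiv.subLeft d) _ _ fun _ => rfl
  have hβ : ∑ x, β * e (d - x) * (β * e x) = β ^ 2 * ∑ x, e (d - x) * e x := by
    rw [mul_sum]
    exact sum_congr rfl fun _ _ => by ring
  simp only [mulVec, dotProduct, circulant_apply, hg]
  simp only [mul_add, add_mul, sum_add_distrib, mul_ite, ite_mul, mul_one, mul_zero, zero_mul,
    ← mul_sum, ← sum_mul]
  simp only [sum_const, card_univ, nsmul_eq_mul, sub_eq_zero, sum_ite_eq, sum_ite_eq', mem_univ,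
    ↓reduceIte, sub_zero, hshift, hβ]
  split_ifs <;> ring

end Convolution

section QuadraticChar

variable {F : Type*} [Field F] [Fintype F] [DecidableEq F]

local notation "χ" => quadraticChar F

theorem two_mul_ite_quadraticChar_eq_one (y : F) :
    2 * (if χ y = 1 then 1 else 0 : ℤ) = 1 - (if y = 0 then 1 else 0) + χ y := by
  rcases eq_or_ne y 0 with rfl | hy
  · simp
  · rcases quadraticChar_dichotomy hy with h | h <;> simp [h, hy]

theorem two_mul_card_quadraticChar_eq_one_add_one (hF : ringChar F ≠ 2) :
    2 * #{x | χ x = 1} + 1 = Fintype.card F := by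
  have h : (2 * #{x | χ x = 1} : ℤ) = Fintype.card F - 1 := by
    rw [← sum_boole, mul_sum]
    simp only [two_mul_ite_quadraticChar_eq_one, sum_add_distrib, sum_sub_distrib,
      quadraticChar_sum_zero hF]
    simp
  omega

theorem sum_quadraticChar_sub_mul_quadraticChar (hF : ringChar F ≠ 2) {d : F} (hd : d ≠ 0) :
    ∑ x, χ (d - x) * χ x = -χ (-1) := by
  have hJ : jacobiSum χ χ = -χ (-1) := by
    simpa [(quadraticChar_isQuadratic F).inv] using
      jacobiSum_nontrivial_inv (quadraticChar_ne_one hF)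
  rw [← hJ, jacobiSum, ← Fintype.sum_bijective (d * ·) (mulLeft_bijective₀ d hd) _ _
    fun y => rfl]
  refine sum_congr rfl fun y _ => ?_
  rw [show d - d * y = d * (1 - y) by ring, map_mul, map_mul, mul_mul_mul_comm, ← map_mul,
    ← sq, quadraticChar_sq_one' hd, one_mul, mul_comm]

theorem four_mul_card_quadraticChar_sub_eq_one (hF : ringChar F ≠ 2) {d : F} (hd : d ≠ 0) :
    (4 * #{x | χ (d - x) = 1 ∧ χ x = 1} : ℤ) = Fintype.card F - 2 - 2 * χ d - χ (-1) := by
  have hshift : ∑ x, χ (d - x) = 0 :=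
    (Fintype.sum_equiv (Equiv.subLeft d) _ χ fun _ => rfl).trans (quadraticChar_sum_zero hF)
  have hpt (x : F) : 4 * (if χ (d - x) = 1 ∧ χ x = 1 then 1 else 0 : ℤ) =
      (1 - (if d - x = 0 then 1 else 0) + χ (d - x)) * (1 - (if x = 0 then 1 else 0) + χ x) := by
    rw [← two_mul_ite_quadraticChar_eq_one, ← two_mul_ite_quadraticChar_eq_one]
    split_ifs <;> simp_all
  rw [← sum_boole, mul_sum, sum_congr rfl fun x _ => hpt x]
  simp only [sub_mul, add_mul, mul_sub, mul_add, sum_add_distrib, sum_sub_distrib, ite_mul,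
    mul_ite, one_mul, mul_one, zero_mul, mul_zero]
  simp only [sum_const, card_univ, Int.nsmul_eq_mul, mul_one, sub_eq_zero, sum_ite_eq,
    sum_ite_eq', mem_univ, ↓reduceIte, hd, sub_zero, zero_sub, add_zero, hshift,
    quadraticChar_sum_zero hF, sum_quadraticChar_sub_mul_quadraticChar hF hd]
  ring

theorem card_quadraticChar_zero_sub_eq_one (hneg : χ (-1) = 1) :
    #{x | χ (0 - x) = 1 ∧ χ x = 1} = #{x | χ x = 1} := by
  refine congrArg card (filter_congr fun x _ => ?_)
  rw [zero_sub, neg_eq_neg_one_mul, map_mul, hneg, one_mul, and_self]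

end QuadraticChar

theorem isSquare_neg_one_of_card_eq {F : Type*} [Field F] [Fintype F] {k : ℕ}
    (hq : Fintype.card F = 4 * k + 1) : IsSquare (-1 : F) :=
  FiniteField.isSquare_neg_one_iff.2 (by omega)

def qrFun {F R : Type*} [Zero F] [Mul F] [DecidableEq F] [CommRing R] (a b c : R) (x : F) : R :=
  if x = 0 then a else if IsSquare x then b else c

theorem qcirc_eq_transpose_circulant {R : Type*} [CommRing R] (p : ℕ) (a b c : R) :
    Qcirc p a b c = (circulant (qrFun a b c))ᵀ :=
  rfl

section QrFun

variable {F R : Type*} [Field F] [DecidableEq F] [CommRing R]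

theorem qrFun_neg (h : IsSquare (-1 : F)) (a b c : R) (x : F) :
    qrFun a b c (-x) = qrFun a b c x := by
  have hsq : ∀ y : F, IsSquare y → IsSquare (-y) := fun y hy => by simpa using h.mul hy
  have hiff : IsSquare (-x) ↔ IsSquare x := ⟨fun hx => by simpa using hsq _ hx, hsq x⟩
  simp only [qrFun, neg_eq_zero, hiff]

theorem transpose_circulant_qrFun (h : IsSquare (-1 : F)) (a b c : R) :
    (circulant (qrFun a b c : F → R))ᵀ = circulant (qrFun a b c) := by
  rw [transpose_circulant]
  simp only [qrFun_neg h]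

variable [Fintype F]

local notation "χ" => quadraticChar F

theorem qrFun_eq_add (a b c : R) (x : F) :
    qrFun a b c x =
      c + (a - c) * (if x = 0 then 1 else 0) + (b - c) * (if χ x = 1 then 1 else 0) := by
  rcases eq_or_ne x 0 with rfl | hx
  · simp [qrFun]
  · simp only [qrFun, hx, quadraticChar_one_iff_isSquare hx, ↓reduceIte]
    split_ifs <;> ring

theorem circulant_qrFun_mulVec_self {k : ℕ} (hq : Fintype.card F = 4 * k + 1) (a b c : R) :
    circulant (qrFun a b c : F → R) *ᵥ qrFun a b c =
      qrFun (a ^ 2 + 2 * (k : R) * (b ^ 2 + c ^ 2)) (2 * a * b - b ^ 2 + (k : R) * (b + c) ^ 2)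
        (2 * a * c - c ^ 2 + (k : R) * (b + c) ^ 2) := by
  have hF : ringChar F ≠ 2 := fun h => by
    have := FiniteField.even_card_iff_char_two.1 h
    omega
  have hneg : χ (-1) = 1 :=
    (quadraticChar_one_iff_isSquare (neg_ne_zero.2 one_ne_zero)).2 (isSquare_neg_one_of_card_eq hq)
  have hS : #{x | χ x = 1} = 2 * k := by
    have := two_mul_card_quadraticChar_eq_one_add_one hF
    omega
  funext d
  rw [circulant_mulVec_self_apply_of_eq (qrFun_eq_add a b c) d]
  simp only [ite_zero_mul_ite_zero, mul_one, sum_boole, hS, hq]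
  rcases eq_or_ne d 0 with rfl | hd
  · simp only [card_quadraticChar_zero_sub_eq_one hneg, hS, qrFun, quadraticChar_zero, zero_ne_one, ↓reduceIte]
    push_cast
    ring
  have h4 := four_mul_card_quadraticChar_sub_eq_one hF hd
  rw [hneg, hq] at h4
  rcases quadraticChar_dichotomy hd with hd1 | hd1
  · have hN : #{x | χ (d - x) = 1 ∧ χ x = 1} + 1 = k := by
      rw [hd1] at h4
      omega
    simp only [← hN, qrFun, hd, hd1, (quadraticChar_one_iff_isSquare hd).1 hd1, ↓reduceIte]
    push_cast
    ring
  · have hN : #{x | χ (d - x) = 1 ∧ χ x = 1} = k := by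
      rw [hd1] at h4
      omega
    simp only [hN, qrFun, hd, hd1, quadraticChar_neg_one_iff_not_isSquare.1 hd1, ↓reduceIte]
    push_cast
    ring

end QrFun

theorem qcirc_mul_transpose_of_prime_four_mul_add_one_general
    {R : Type*} [CommRing R] (k : ℕ)
    (hp : Nat.Prime (4 * k + 1)) (a b c : R) :
    Qcirc (4 * k + 1) a b c * (Qcirc (4 * k + 1) a b c)ᵀ =
      Qcirc (4 * k + 1)
        (a ^ 2 + 2 * (k : R) * (b ^ 2 + c ^ 2))
        (2 * a * b - b ^ 2 + (k : R) * (b + c) ^ 2)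
        (2 * a * c - c ^ 2 + (k : R) * (b + c) ^ 2) := by
  have := Fact.mk hp
  have hq : Fintype.card (ZMod (4 * k + 1)) = 4 * k + 1 := ZMod.card _
  have hsymm := transpose_circulant_qrFun (R := R) (isSquare_neg_one_of_card_eq hq)
  rw [qcirc_eq_transpose_circulant, qcirc_eq_transpose_circulant, transpose_transpose, hsymm,
    hsymm, circulant_mul, circulant_qrFun_mulVec_self hq]

/-- Gaborit's quadratic residue circulant identity for primes `p = 4k + 1`. -/
theorem qcirc_mul_transpose_of_prime_four_mul_add_one
    {R : Type*} [CommRing R] (k : ℕ) (hk : 0 < k)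
    (hp : Nat.Prime (4 * k + 1)) (a b c : R) :
    Qcirc (4 * k + 1) a b c * (Qcirc (4 * k + 1) a b c)ᵀ =
      Qcirc (4 * k + 1)
        (a ^ 2 + 2 * (k : R) * (b ^ 2 + c ^ 2))
        (2 * a * b - b ^ 2 + (k : R) * (b + c) ^ 2)
        (2 * a * c - c ^ 2 + (k : R) * (b + c) ^ 2) :=
  qcirc_mul_transpose_of_prime_four_mul_add_one_general k hp a b c

end
end

section
/- Let p be a prime with p ≡ 3 (mod 8). The bordered quadratic double circulant code B_p(1, u+uω, 1, u+uω, 1+u+uω, 1+u+uω) over F₄+uF₄ is a self-dual code of length 2p+2 over F₄+uF₄. -/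
noncomputable section

open Matrix
open scoped Classical

/-- The bordered matrix `M` of size `(p+1) × (p+1)` (rows and columns indexed by
`Option (ZMod p)`, with `none` the border index): `M[none,none] = lam`,
`M[none, some j] = beta`, `M[some i, none] = gam`, and the lower-right `p × p`
block is `Q_p(a,b,c)`. -/
def borderedQ {R : Type*} [CommRing R] (p : ℕ) (a b c lam beta gam : R) :
    Option (ZMod p) → Option (ZMod p) → R := fun i j =>
  match i, j with
  | none, none => lam
  | none, some _ => beta
  | some _, none => gam
  | some i', some j' => Qcirc p a b c i' j'

/-- The rows of the generator matrix `[ I_{p+1} | M ]` of the bordered quadratic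
double circulant code, as vectors of length `2p + 2`. -/
def borderedQDCGen {R : Type*} [CommRing R] (p : ℕ) (a b c lam beta gam : R) :
    Option (ZMod p) → (Option (ZMod p) ⊕ Option (ZMod p)) → R := fun i =>
  Sum.elim (fun j => if i = j then 1 else 0) (fun j => borderedQ p a b c lam beta gam i j)

/-- The bordered quadratic double circulant code `B_p(a,b,c,λ,β,γ)`: the row span of
`[ I_{p+1} | M ]`, a linear code of length `2p + 2` over `R`. -/
def borderedQDC {R : Type*} [CommRing R] (p : ℕ) (a b c lam beta gam : R) :
    Submodule R ((Option (ZMod p) ⊕ Option (ZMod p)) → R) :=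
  Submodule.span R (Set.range (borderedQDCGen p a b c lam beta gam))

/-- The dual of a code `C ⊆ Rⁿ` with respect to the Euclidean inner product. -/
def dualSet {R ι : Type*} [CommRing R] [Fintype ι] (C : Set (ι → R)) : Set (ι → R) :=
  {x | ∀ y ∈ C, ∑ i, x i * y i = 0}

/-- The field `F₄` with four elements. -/
abbrev F4 := GaloisField 2 2

/-- The ring `F₄ + u F₄ = F₄[u]/(u²)`. -/
abbrev R4 := DualNumber F4

/-!
Write `v = u + uω` and `w = 1 + v`. In `F₄ + uF₄` we have `2 = 0` and `v² = 0`, so `w² = 1`, and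
the circulant block is `Q = J + w G`, where `J` is the all-ones matrix and `G i j = [j - i ∈ S]`
for the set `S` of nonzero squares of `ZMod p`. The code spanned by `[I | M]` is self-dual as soon
as `M Mᵀ = -1`, and in characteristic 2 the entries of `M Mᵀ` depend only on the parities of
`|S| = (p - 1)/2`, which is odd, and of `N(d) = #{t | t ∈ S ∧ t + d ∈ S}` for `d ≠ 0`. As `-1`
is a nonsquare, an affine change of variables shows that `N(d)` does not depend on `d`; since
`∑ d, N(d) = |S|²` and `N(0) = |S|`, this gives `N(d) = (p - 3)/4`, which is even for
`p ≡ 3 (mod 8)`.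
-/

open Finset

section SelfDual

variable {R ι : Type*} [CommRing R] [Fintype ι]

lemma mem_dualSet_span_iff {S : Set (ι → R)} {x : ι → R} :
    x ∈ dualSet (Submodule.span R S : Set (ι → R)) ↔ ∀ y ∈ S, ∑ i, x i * y i = 0 := by
  refine ⟨fun hx y hy => hx y (Submodule.subset_span hy), fun hx y hy => ?_⟩
  induction hy using Submodule.span_induction with
  | mem y hy => exact hx y hy
  | zero => simp
  | add y z _ _ hy hz => simp [mul_add, sum_add_distrib, hy, hz]
  | smul r y _ hy => simp [mul_left_comm _ r, ← mul_sum, hy]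

variable [DecidableEq ι] (M : Matrix ι ι R)

def systematicRows : ι → ι ⊕ ι → R := fun i => (1 : Matrix ι ι R) i ⊕ᵥ M i

lemma mem_span_systematicRows_iff {x : ι ⊕ ι → R} :
    x ∈ Submodule.span R (Set.range (systematicRows M)) ↔
      x ∘ Sum.inr = (x ∘ Sum.inl) ᵥ* M := by
  rw [Submodule.mem_span_range_iff_exists_fun]
  constructor
  · rintro ⟨c, rfl⟩
    ext j
    simp [systematicRows, Finset.sum_apply, vecMul, dotProduct, one_apply]
  · intro hx
    refine ⟨x ∘ Sum.inl, ?_⟩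
    ext (j | j)
    · simp [systematicRows, Finset.sum_apply, one_apply]
    · simpa [systematicRows, Finset.sum_apply, vecMul, dotProduct] using (congrFun hx j).symm

lemma mem_dualSet_span_systematicRows_iff {x : ι ⊕ ι → R} :
    x ∈ dualSet (Submodule.span R (Set.range (systematicRows M)) :
      Set (ι ⊕ ι → R)) ↔ x ∘ Sum.inl + M *ᵥ (x ∘ Sum.inr) = 0 := by
  rw [mem_dualSet_span_iff, Set.forall_mem_range, funext_iff]
  refine forall_congr' fun i => ?_
  simp [systematicRows, Fintype.sum_sum_type, one_apply, mulVec, dotProduct, mul_comm]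

theorem span_systematicRows_eq_dualSet (hM : M * Mᵀ = -1) :
    (Submodule.span R (Set.range (systematicRows M)) : Set (ι ⊕ ι → R)) =
      dualSet (Submodule.span R (Set.range (systematicRows M)) :
        Set (ι ⊕ ι → R)) := by
  have hM' : Mᵀ * M = -1 := by
    rw [← neg_eq_iff_eq_neg, ← neg_mul]
    exact mul_eq_one_comm.mp (by rw [mul_neg, hM, neg_neg])
  ext x
  rw [SetLike.mem_coe, mem_span_systematicRows_iff,
    mem_dualSet_span_systematicRows_iff]
  constructor
  · intro h
    rw [h, ← mulVec_transpose, mulVec_mulVec, hM, neg_mulVec,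
      one_mulVec, add_neg_cancel]
  · intro h
    rw [eq_neg_of_add_eq_zero_left h, neg_vecMul, ← mulVec_transpose,
      mulVec_mulVec, hM', neg_mulVec, one_mulVec, neg_neg]

end SelfDual

section QuadraticResidues

variable (F : Type*) [Field F] [Fintype F] [DecidableEq F]

def quadraticResidues : Finset F := {x | quadraticChar F x = 1}

variable {F}

lemma mem_quadraticResidues {x : F} : x ∈ quadraticResidues F ↔ quadraticChar F x = 1 := by
  simp [quadraticResidues]

lemma mem_quadraticResidues_mul_left {a : F} (ha : a ∈ quadraticResidues F) (x : F) :
    a * x ∈ quadraticResidues F ↔ x ∈ quadraticResidues F := by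
  rw [mem_quadraticResidues] at ha
  simp only [mem_quadraticResidues, map_mul, ha, one_mul]

lemma sum_card_quadraticResidues_shift :
    ∑ d : F, #{t | t ∈ quadraticResidues F ∧ t + d ∈ quadraticResidues F} =
      #(quadraticResidues F) ^ 2 := by
  have hrow (t : F) : ∑ d : F, (if t + d ∈ quadraticResidues F then 1 else 0) =
      #(quadraticResidues F) := by
    refine (Equiv.sum_comp (Equiv.addLeft t)
      fun x => if x ∈ quadraticResidues F then 1 else 0).trans ?_
    simp
  simp_rw [card_filter, ite_and]
  rw [sum_comm]
  calc _ = ∑ t : F, if t ∈ quadraticResidues F then #(quadraticResidues F) else 0 :=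
        sum_congr rfl fun t _ => by split_ifs <;> simp [hrow]
    _ = _ := by rw [sum_ite_mem, univ_inter, sum_const, smul_eq_mul, sq]

variable (hF : Fintype.card F % 4 = 3)
include hF

lemma quadraticChar_neg_of_card_mod_four_eq_three (x : F) :
    quadraticChar F (-x) = -quadraticChar F x := by
  have h : quadraticChar F (-1) = -1 :=
    quadraticChar_neg_one_iff_not_isSquare.mpr (by rw [FiniteField.isSquare_neg_one_iff]; omega)
  rw [neg_eq_neg_one_mul, map_mul, h, neg_one_mul]

lemma two_mul_card_quadraticResidues_add_one :
    2 * #(quadraticResidues F) + 1 = Fintype.card F := by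
  have hneg : #{x : F | quadraticChar F x = -1} = #(quadraticResidues F) := by
    refine card_equiv (Equiv.neg F) fun x => ?_
    simp [mem_quadraticResidues, quadraticChar_neg_of_card_mod_four_eq_three hF, neg_eq_iff_eq_neg]
  have hsplit := card_filter_add_card_filter_not (s := ({x | x ≠ 0} : Finset F))
    (fun x => quadraticChar F x = 1)
  rw [filter_filter, filter_filter, filter_ne', card_erase_of_mem (mem_univ 0), card_univ]
    at hsplit
  have hres : ({x | x ≠ 0 ∧ quadraticChar F x = 1} : Finset F) = quadraticResidues F := by
    ext x
    simp only [mem_filter, mem_univ, true_and, mem_quadraticResidues, and_iff_right_iff_imp]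
    rintro hx rfl
    simp at hx
  have hnonres : ({x | x ≠ 0 ∧ ¬quadraticChar F x = 1} : Finset F) =
      ({x | quadraticChar F x = -1} : Finset F) := by
    ext x
    simp only [mem_filter, mem_univ, true_and]
    refine ⟨fun h => (quadraticChar_eq_neg_one_iff_not_one h.1).mpr h.2, fun h => ?_⟩
    have hx : x ≠ 0 := by rintro rfl; simp at h
    exact ⟨hx, (quadraticChar_eq_neg_one_iff_not_one hx).mp h⟩
  have hpos : 0 < Fintype.card F := Fintype.card_pos
  rw [hres, hnonres, hneg] at hsplit
  omega

lemma card_quadraticResidues_shift_eq_one (d : F) (hd : d ≠ 0) :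
    #{t | t ∈ quadraticResidues F ∧ t + d ∈ quadraticResidues F} =
      #{t | t ∈ quadraticResidues F ∧ t + 1 ∈ quadraticResidues F} := by
  symm
  by_cases hsq : d ∈ quadraticResidues F
  · refine card_equiv (Equiv.mulLeft₀ d hd) fun s => ?_
    simp only [mem_filter, mem_univ, true_and, Equiv.mulLeft₀_apply]
    rw [← mul_add_one, mem_quadraticResidues_mul_left hsq, mem_quadraticResidues_mul_left hsq]
  · have hnd : -d ∈ quadraticResidues F := by
      rw [mem_quadraticResidues] at hsq ⊢
      rw [quadraticChar_neg_of_card_mod_four_eq_three hF,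
        (quadraticChar_eq_neg_one_iff_not_one hd).mpr hsq, neg_neg]
    refine card_equiv ((Equiv.addRight 1).trans (Equiv.mulLeft₀ (-d) (neg_ne_zero.mpr hd)))
      fun s => ?_
    simp only [mem_filter, mem_univ, true_and, Equiv.trans_apply, Equiv.coe_addRight,
      Equiv.mulLeft₀_apply]
    have : -d * (s + 1) + d = -d * s := by ring
    rw [this, mem_quadraticResidues_mul_left hnd, mem_quadraticResidues_mul_left hnd, and_comm]

lemma four_mul_card_quadraticResidues_shift_add_three (d : F) (hd : d ≠ 0) :
    4 * #{t | t ∈ quadraticResidues F ∧ t + d ∈ quadraticResidues F} + 3 =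
      Fintype.card F := by
  have hm := two_mul_card_quadraticResidues_add_one hF
  have hsum := sum_card_quadraticResidues_shift (F := F)
  rw [← add_sum_erase _ _ (mem_univ 0),
    sum_congr rfl fun e he => card_quadraticResidues_shift_eq_one hF e (ne_of_mem_erase he),
    sum_const, card_erase_of_mem (mem_univ 0), card_univ, smul_eq_mul, ← hm] at hsum
  simp only [add_zero, and_self, filter_mem_eq_inter, univ_inter, add_tsub_cancel_right] at hsum
  rw [card_quadraticResidues_shift_eq_one hF d hd, ← hm]
  generalize #(quadraticResidues F) = m at *
  generalize #{t | t ∈ quadraticResidues F ∧ t + 1 ∈ quadraticResidues F} = n at *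
  have hpos : 0 < m := by omega
  have hmn : 2 * n + 1 = m := Nat.eq_of_mul_eq_mul_left hpos (by linarith)
  omega

end QuadraticResidues

section CharTwo

variable {R : Type*} [CommRing R] [CharP R 2]

lemma natCast_eq_one_of_mod_two_eq_one {n : ℕ} (hn : n % 2 = 1) : (n : R) = 1 := by
  rw [CharTwo.natCast_eq_mod, hn, Nat.cast_one]

lemma one_add_mul_self_of_mul_self_eq_zero {v : R} (hv : v * v = 0) : (1 + v) * (1 + v) = 1 := by
  rw [CharTwo.add_mul_self, hv, mul_one, add_zero]

variable {F : Type*} [Field F] [Fintype F] [DecidableEq F]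

lemma sum_ite_sub_mem_quadraticResidues (hF : Fintype.card F % 4 = 3) (i : F) :
    ∑ j : F, (if j - i ∈ quadraticResidues F then 1 else 0 : R) = 1 := by
  have hm := two_mul_card_quadraticResidues_add_one hF
  refine ((Equiv.subRight i).sum_comp
    fun t => (if t ∈ quadraticResidues F then 1 else 0 : R)).trans ?_
  rw [← natCast_card_filter, filter_mem_eq_inter, univ_inter,
    natCast_eq_one_of_mod_two_eq_one (by omega)]

lemma sum_ite_sub_mem_quadraticResidues_mul (hF : Fintype.card F % 8 = 3) (i k : F) :
    ∑ j : F, (if j - i ∈ quadraticResidues F then 1 else 0 : R) *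
      (if j - k ∈ quadraticResidues F then 1 else 0) = if i = k then 1 else 0 := by
  have hF4 : Fintype.card F % 4 = 3 := by omega
  simp_rw [ite_zero_mul_ite_zero, one_mul]
  rw [Fintype.sum_equiv (Equiv.subRight i) _ (fun t => (if t ∈ quadraticResidues F ∧
      t + (i - k) ∈ quadraticResidues F then 1 else 0 : R)) fun j => by simp,
    ← natCast_card_filter]
  split_ifs with hik
  · have hm := two_mul_card_quadraticResidues_add_one hF4
    simp only [hik, sub_self, add_zero, and_self, filter_mem_eq_inter, univ_inter]
    exact natCast_eq_one_of_mod_two_eq_one (by omega)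
  · have hN := four_mul_card_quadraticResidues_shift_add_three hF4 (i - k) (sub_ne_zero.mpr hik)
    rw [CharTwo.natCast_eq_mod, show #{t | t ∈ quadraticResidues F ∧
      t + (i - k) ∈ quadraticResidues F} % 2 = 0 by omega, Nat.cast_zero]

end CharTwo

section Bordered

variable {R : Type*} [CommRing R] [CharP R 2] {p : ℕ} [Fact p.Prime]

lemma Qcirc_one_one_apply (v : R) (i j : ZMod p) :
    Qcirc p 1 v 1 i j = 1 + (1 + v) * if j - i ∈ quadraticResidues (ZMod p) then 1 else 0 := by
  rw [Qcirc, of_apply]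
  by_cases h0 : j - i = 0
  · simp [h0, mem_quadraticResidues]
  · simp only [if_neg h0, mem_quadraticResidues, quadraticChar_one_iff_isSquare h0]
    split_ifs
    · rw [mul_one, CharTwo.add_cancel_left]
    · rw [mul_zero, add_zero]

lemma sum_Qcirc_one_one (hp : p % 4 = 3) (v : R) (i : ZMod p) :
    ∑ j, Qcirc p 1 v 1 i j = v := by
  simp_rw [Qcirc_one_one_apply, sum_add_distrib, ← mul_sum]
  rw [sum_ite_sub_mem_quadraticResidues (by rwa [ZMod.card]), sum_const, card_univ, ZMod.card,
    nsmul_one, natCast_eq_one_of_mod_two_eq_one (by omega), mul_one, CharTwo.add_cancel_left]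

lemma sum_Qcirc_one_one_mul (hp : p % 8 = 3) {v : R} (hv : v * v = 0) (i k : ZMod p) :
    ∑ j, Qcirc p 1 v 1 i j * Qcirc p 1 v 1 k j = 1 + if i = k then 1 else 0 := by
  have hp4 : p % 4 = 3 := by omega
  have hw := one_add_mul_self_of_mul_self_eq_zero hv
  have hexpand (a b : R) : (1 + (1 + v) * a) * (1 + (1 + v) * b) =
      1 + (1 + v) * a + (1 + v) * b + (1 + v) * (1 + v) * (a * b) := by ring
  simp_rw [Qcirc_one_one_apply, hexpand, sum_add_distrib, ← mul_sum, hw, one_mul]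
  rw [sum_ite_sub_mem_quadraticResidues (by rwa [ZMod.card]),
    sum_ite_sub_mem_quadraticResidues (by rwa [ZMod.card]),
    sum_ite_sub_mem_quadraticResidues_mul (by rwa [ZMod.card]), sum_const, card_univ, ZMod.card,
    nsmul_one, natCast_eq_one_of_mod_two_eq_one (by omega), mul_one, add_assoc 1,
    CharTwo.add_self_eq_zero, add_zero]

theorem borderedQ_mul_transpose (hp : p % 8 = 3) {v : R} (hv : v * v = 0) :
    of (borderedQ p 1 v 1 v (1 + v) (1 + v)) * (of (borderedQ p 1 v 1 v (1 + v) (1 + v)))ᵀ =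
      1 := by
  have hw := one_add_mul_self_of_mul_self_eq_zero hv
  have hp1 : (p : R) = 1 := natCast_eq_one_of_mod_two_eq_one (by omega)
  ext (_ | i) (_ | k) <;>
    simp only [mul_apply, transpose_apply, of_apply, Fintype.sum_option, borderedQ, one_apply,
      reduceCtorEq, if_false, if_true, Option.some.injEq]
  · rw [hv, hw, sum_const, card_univ, ZMod.card, nsmul_one, hp1, zero_add]
  · rw [← mul_sum, sum_Qcirc_one_one (by omega), mul_comm, CharTwo.add_self_eq_zero]
  · rw [← sum_mul, sum_Qcirc_one_one (by omega), mul_comm v, CharTwo.add_self_eq_zero]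
  · rw [hw, sum_Qcirc_one_one_mul hp hv, CharTwo.add_cancel_left]

end Bordered

theorem borderedQDC_self_dual_of_mod_eight_eq_three_typeI_general
    (p : ℕ) [NeZero p] (hp : Nat.Prime p) (h3 : p % 8 = 3)
    (ω : R4) :
    letI u : R4 := DualNumber.eps
    (borderedQDC p 1 (u + u * ω) 1 (u + u * ω) (1 + u + u * ω) (1 + u + u * ω) :
        Set ((Option (ZMod p) ⊕ Option (ZMod p)) → R4)) =
      dualSet (borderedQDC p 1 (u + u * ω) 1 (u + u * ω) (1 + u + u * ω) (1 + u + u * ω) :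
        Set ((Option (ZMod p) ⊕ Option (ZMod p)) → R4)) := by
  have : Fact p.Prime := ⟨hp⟩
  have : CharP R4 2 := charP_of_injective_ringHom (f := algebraMap F4 R4)
    TrivSqZeroExt.inl_injective 2
  have hv :
      (DualNumber.eps + DualNumber.eps * ω) * (DualNumber.eps + DualNumber.eps * ω) = 0 := by
    rw [← mul_one_add, mul_mul_mul_comm, DualNumber.eps_mul_eps, zero_mul]
  rw [add_assoc 1]
  have hM := borderedQ_mul_transpose h3 hv
  rw [← CharTwo.neg_eq (1 : Matrix _ _ R4)] at hM
  exact span_systematicRows_eq_dualSet _ hM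

/-- For a prime `p ≡ 3 (mod 8)` and `ω` a root of `x² + x + 1` in `F₄ + u F₄`,
the bordered quadratic double circulant code
`B_p(1, u + uω, 1, u + uω, 1 + u + uω, 1 + u + uω)` over `F₄ + u F₄`
is self-dual of length `2p + 2`. -/
theorem borderedQDC_self_dual_of_mod_eight_eq_three_typeI
    (p : ℕ) [NeZero p] (hp : Nat.Prime p) (h3 : p % 8 = 3)
    (ω : R4) (hω : ω ^ 2 + ω + 1 = 0) :
    letI u : R4 := DualNumber.eps
    (borderedQDC p 1 (u + u * ω) 1 (u + u * ω) (1 + u + u * ω) (1 + u + u * ω) :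
        Set ((Option (ZMod p) ⊕ Option (ZMod p)) → R4)) =
      dualSet (borderedQDC p 1 (u + u * ω) 1 (u + u * ω) (1 + u + u * ω) (1 + u + u * ω) :
        Set ((Option (ZMod p) ⊕ Option (ZMod p)) → R4)) :=
  borderedQDC_self_dual_of_mod_eight_eq_three_typeI_general p hp h3 ω

end
end

section
/- The Gray map φ preserves orthogonality: for all x, y ∈ (F₂+uF₂)ⁿ, if ⟨x,y⟩ = Σᵢ xᵢyᵢ = 0 in F₂+uF₂, then ⟨φ(x), φ(y)⟩ = 0 in F₂. Consequently, the Gray image φ(C) of a self-dual code C of length n over F₂+uF₂ is a self-dual binary code of length 2n. -/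
noncomputable section

/-- The field `F₂` with two elements. -/
abbrev F2 := ZMod 2

/-- The ring `F₂ + u F₂ = F₂[u]/(u²)`. -/
abbrev R2 := DualNumber F2

/-- The Gray map `φ : (F₂ + u F₂)ⁿ → F₂^{2n}`, sending `a + bu ↦ (b, a + b)`
componentwise. -/
def grayPhi {ι : Type*} (x : ι → R2) : (ι ⊕ ι) → F2 :=
  Sum.elim (fun i => TrivSqZeroExt.snd (x i))
    (fun i => TrivSqZeroExt.fst (x i) + TrivSqZeroExt.snd (x i))

open TrivSqZeroExt

lemma f2_key : ∀ a b c d : ZMod 2,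
    b * d + (a + b) * (c + d) = a * c + (a * d + b * c) := by decide

lemma f2_key2 : ∀ a b : ZMod 2, a + b + b = a := by decide

lemma f2_key3 : ∀ p q a b : ZMod 2,
    (q + p) * b + p * a = p * b + q * (a + b) + (p * a + q * a) := by decide

lemma f2_key4 : ∀ p q a : ZMod 2, (q + p) * a = p * a + q * a := by decide

open Finset in
lemma gray_inner {n : ℕ} (x y : Fin n → R2) (h : ∑ i, x i * y i = 0) :
    ∑ i, grayPhi x i * grayPhi y i = 0 := by
  have h1 : ∑ i, (x i).fst * (y i).fst = 0 := by
    have := congrArg fst h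
    simpa [fst_sum, fst_mul] using this
  have h2 : ∑ i, ((x i).fst * (y i).snd + (x i).snd * (y i).fst) = 0 := by
    have := congrArg snd h
    simpa [snd_sum, snd_mul, smul_eq_mul, mul_comm] using this
  rw [Fintype.sum_sum_type]
  simp only [grayPhi, Sum.elim_inl, Sum.elim_inr]
  rw [← Finset.sum_add_distrib]
  calc ∑ i, ((x i).snd * (y i).snd + ((x i).fst + (x i).snd) * ((y i).fst + (y i).snd))
      = ∑ i, ((x i).fst * (y i).fst + ((x i).fst * (y i).snd + (x i).snd * (y i).fst)) :=
        Finset.sum_congr rfl fun i _ => f2_key _ _ _ _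
    _ = 0 := by rw [Finset.sum_add_distrib, h1, h2, add_zero]

lemma grayPhi_add {ι : Type*} (x y : ι → R2) :
    grayPhi (x + y) = grayPhi x + grayPhi y := by
  funext j; cases j <;> simp [grayPhi] <;> ring

lemma grayPhi_zero {ι : Type*} : grayPhi (0 : ι → R2) = 0 := by
  funext j; cases j <;> simp [grayPhi]

set_option synthInstance.maxHeartbeats 1000000 in
set_option maxHeartbeats 1000000 in
/-- The Gray map `φ` preserves orthogonality: if `⟨x, y⟩ = 0` in `F₂ + u F₂` then
`⟨φ(x), φ(y)⟩ = 0` in `F₂`.  Consequently, the Gray image `φ(C)` of a self-dual code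
`C` of length `n` over `F₂ + u F₂` is a self-dual binary code of length `2n`. -/
theorem grayPhi_preserves_orthogonality_and_self_dual (n : ℕ) :
    (∀ x y : Fin n → R2, ∑ i, x i * y i = 0 →
      ∑ i, grayPhi x i * grayPhi y i = 0) ∧
    (∀ C : Submodule R2 (Fin n → R2),
      (C : Set (Fin n → R2)) = dualSet (C : Set (Fin n → R2)) →
      ∃ D : Submodule F2 ((Fin n ⊕ Fin n) → F2),
        (D : Set ((Fin n ⊕ Fin n) → F2)) = grayPhi '' (C : Set (Fin n → R2)) ∧
        (D : Set ((Fin n ⊕ Fin n) → F2)) =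
          dualSet (D : Set ((Fin n ⊕ Fin n) → F2))) := by
  refine ⟨fun x y h => gray_inner x y h, fun C hC => ?_⟩
  have hCdual : ∀ x ∈ C, ∀ y ∈ C, ∑ i, x i * y i = 0 := by
    intro x hx
    have hx' : x ∈ dualSet (C : Set (Fin n → R2)) := hC ▸ hx
    exact hx'
  refine ⟨{ carrier := grayPhi '' (C : Set (Fin n → R2))
            add_mem' := ?_
            zero_mem' := ⟨0, C.zero_mem, grayPhi_zero⟩
            smul_mem' := ?_ }, rfl, ?_⟩
  · rintro _ _ ⟨a, ha, rfl⟩ ⟨b, hb, rfl⟩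
    exact ⟨a + b, C.add_mem ha hb, grayPhi_add a b⟩
  · rintro c _ ⟨a, ha, rfl⟩
    rcases (by decide : ∀ c : F2, c = 0 ∨ c = 1) c with rfl | rfl
    · exact ⟨0, C.zero_mem, by rw [grayPhi_zero, zero_smul]⟩
    · exact ⟨a, ha, by rw [one_smul]⟩
  · apply Set.Subset.antisymm
    · rintro _ ⟨x, hx, rfl⟩ _ ⟨y, hy, rfl⟩
      exact gray_inner x y (hCdual x hx y hy)
    · intro z hz
      -- hz : ∀ w ∈ grayPhi '' C, ∑ j, z j * w j = 0
      set x : Fin n → R2 :=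
        fun i => inl (z (Sum.inr i) + z (Sum.inl i)) + inr (z (Sum.inl i)) with hxdef
      have hxfst : ∀ i, (x i).fst = z (Sum.inr i) + z (Sum.inl i) := by
        intro i; simp [hxdef]
      have hxsnd : ∀ i, (x i).snd = z (Sum.inl i) := by
        intro i; simp [hxdef]
      have hE : ∀ y ∈ C,
          ∑ i, z (Sum.inl i) * (y i).snd
            + ∑ i, z (Sum.inr i) * ((y i).fst + (y i).snd) = 0 := by
        intro y hy
        have := hz (grayPhi y) ⟨y, hy, rfl⟩
        rw [Fintype.sum_sum_type] at this
        simpa [grayPhi] using this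
      have hE2 : ∀ y ∈ C,
          ∑ i, z (Sum.inl i) * (y i).fst
            + ∑ i, z (Sum.inr i) * (y i).fst = 0 := by
        intro y hy
        have hy' : (DualNumber.eps : R2) • y ∈ C := C.smul_mem _ hy
        have e1 : ∀ i, (((DualNumber.eps : R2) • y) i).fst = 0 := by
          intro i
          simp [Pi.smul_apply, smul_eq_mul, fst_mul, DualNumber.fst_eps]
        have e2 : ∀ i, (((DualNumber.eps : R2) • y) i).snd = (y i).fst := by
          intro i
          simp [Pi.smul_apply, smul_eq_mul, snd_mul, DualNumber.fst_eps,
            DualNumber.snd_eps]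
        have := hE _ hy'
        simpa [e1, e2] using this
      have hxC : x ∈ (C : Set (Fin n → R2)) := by
        rw [hC]
        intro y hy
        refine TrivSqZeroExt.ext ?_ ?_
        · rw [fst_sum]
          calc ∑ i, (x i * y i).fst
              = ∑ i, (z (Sum.inl i) * (y i).fst + z (Sum.inr i) * (y i).fst) := by
                refine Finset.sum_congr rfl fun i _ => ?_
                rw [fst_mul, hxfst]
                exact f2_key4 _ _ _
            _ = 0 := by rw [Finset.sum_add_distrib]; exact hE2 y hy
        · rw [snd_sum]
          calc ∑ i, (x i * y i).snd
              = ∑ i, ((z (Sum.inl i) * (y i).snd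
                    + z (Sum.inr i) * ((y i).fst + (y i).snd))
                  + (z (Sum.inl i) * (y i).fst + z (Sum.inr i) * (y i).fst)) := by
                refine Finset.sum_congr rfl fun i _ => ?_
                rw [snd_mul, hxfst, hxsnd]
                simpa [smul_eq_mul, mul_comm] using f2_key3
                  (z (Sum.inl i)) (z (Sum.inr i)) ((y i).fst) ((y i).snd)
            _ = 0 := by
                rw [Finset.sum_add_distrib, Finset.sum_add_distrib,
                  Finset.sum_add_distrib, hE y hy]
                simpa using hE2 y hy
      refine ⟨x, hxC, ?_⟩
      funext j
      cases j with
      | inl i => simp [grayPhi, hxsnd]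
      | inr i => simp [grayPhi, hxfst, hxsnd, f2_key2]

end
end

section
/- The Gray map ψ preserves orthogonality: for all x, y ∈ (F₄+uF₄)ⁿ, if ⟨x,y⟩ = Σᵢ xᵢyᵢ = 0 in F₄+uF₄, then ⟨ψ(x), ψ(y)⟩ = 0 in F₂+uF₂. Consequently, the Gray image ψ(C) of a self-dual code C of length n over F₄+uF₄ is a self-dual code of length 2n over F₂+uF₂. -/
set_option synthInstance.maxHeartbeats 1000000
set_option maxHeartbeats 1000000

noncomputable section

/-- The canonical embedding of `F₂ + u F₂` into `F₄ + u F₄`,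
sending `a + bu ↦ a + bu`. -/
def emb (r : R2) : R4 :=
  TrivSqZeroExt.inl (algebraMap F2 F4 (TrivSqZeroExt.fst r)) +
    TrivSqZeroExt.inr (algebraMap F2 F4 (TrivSqZeroExt.snd r))

/-- The inverse of the Gray map `ψ : (F₄ + u F₄)ⁿ → (F₂ + u F₂)^{2n}`,
`ψ(aω + b ω̄) = (a, b)`: given `ω` (a root of `x² + x + 1`, with `ω̄ = 1 + ω`), it sends
`(a, b) ↦ aω + b ω̄` componentwise.  Thus `ψ x = y ↔ psiInv ω y = x` and
`ψ(C) = psiInv ω ⁻¹' C`. -/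
def psiInv {ι : Type*} (ω : R4) (y : (ι ⊕ ι) → R2) : ι → R4 := fun i =>
  emb (y (Sum.inl i)) * ω + emb (y (Sum.inr i)) * (1 + ω)

open TrivSqZeroExt

lemma two_F4 : (2 : F4) = 0 := by
  have := CharP.cast_eq_zero F4 2; exact_mod_cast this

lemma two_R2 : (2 : R2) = 0 := by refine TrivSqZeroExt.ext ?_ ?_ <;> decide

lemma two_R4 : (2 : R4) = 0 := by
  have : (2 : R4) = 1 + 1 := by norm_num
  rw [this]
  refine TrivSqZeroExt.ext ?_ ?_ <;> simp [two_F4]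
  exact_mod_cast two_F4

lemma emb_fst (r : R2) : fst (emb r) = algebraMap F2 F4 (fst r) := by simp [emb]
lemma emb_snd (r : R2) : snd (emb r) = algebraMap F2 F4 (snd r) := by
  simp [emb, Algebra.algebraMap_eq_smul_one]

/-- `emb` as a ring homomorphism. -/
def embHom : R2 →+* R4 where
  toFun := emb
  map_one' := by refine TrivSqZeroExt.ext ?_ ?_ <;> simp [emb_fst, emb_snd]
  map_zero' := by refine TrivSqZeroExt.ext ?_ ?_ <;> simp [emb_fst, emb_snd]
  map_add' r s := by
    refine TrivSqZeroExt.ext ?_ ?_ <;> simp [emb_fst, emb_snd]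
  map_mul' r s := by
    refine TrivSqZeroExt.ext ?_ ?_ <;>
      simp [emb_fst, emb_snd, TrivSqZeroExt.snd_mul, smul_eq_mul, map_add]

lemma emb_eq : emb = embHom := rfl

lemma F4_indep (w : F4) (hw : w^2 + w + 1 = 0) (p q : F2)
    (h : algebraMap F2 F4 p + algebraMap F2 F4 q * w = 0) : p = 0 ∧ q = 0 := by
  have hcases : ∀ x : F2, x = 0 ∨ x = 1 := by decide
  have h1 : (1 : F4) ≠ 0 := one_ne_zero
  rcases hcases p with hp | hp <;> rcases hcases q with hq | hq <;> subst hp hq <;>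
      simp only [map_zero, map_one, zero_add, add_zero, one_mul, zero_mul] at h
  · exact ⟨rfl, rfl⟩
  · exact absurd (show (1:F4) = 0 by linear_combination hw - (w+1) * h) h1
  · exact absurd h h1
  · exact absurd (show (1:F4) = 0 by linear_combination hw - w * h) h1

lemma fst_omega (ω : R4) (hω : ω ^ 2 + ω + 1 = 0) :
    (fst ω)^2 + fst ω + 1 = 0 := by
  have := congrArg fst hω
  simpa [sq] using this

lemma R4_indep (ω : R4) (hω : ω ^ 2 + ω + 1 = 0) (c d : R2)
    (h : emb c + emb d * ω = 0) : c = 0 ∧ d = 0 := by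
  have hw := fst_omega ω hω
  have h1 : algebraMap F2 F4 (fst c) + algebraMap F2 F4 (fst d) * fst ω = 0 := by
    have := congrArg fst h
    simpa [emb_fst] using this
  obtain ⟨hc1, hd1⟩ := F4_indep _ hw _ _ h1
  have h2 : algebraMap F2 F4 (snd c) + algebraMap F2 F4 (snd d) * fst ω = 0 := by
    have := congrArg snd h
    simp [emb_snd, emb_fst, TrivSqZeroExt.snd_mul, smul_eq_mul, hd1] at this
    linear_combination this
  obtain ⟨hc2, hd2⟩ := F4_indep _ hw _ _ h2
  exact ⟨TrivSqZeroExt.ext hc1 hc2, TrivSqZeroExt.ext hd1 hd2⟩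

lemma F4_span (w : F4) (hw : w^2 + w + 1 = 0) (t : F4) :
    ∃ p q : F2, algebraMap F2 F4 p + algebraMap F2 F4 q * w = t := by
  set f : F2 × F2 → F4 := fun pq => algebraMap F2 F4 pq.1 + algebraMap F2 F4 pq.2 * w with hf
  have hinj : Function.Injective f := by
    intro ⟨p1, q1⟩ ⟨p2, q2⟩ h
    simp only [hf] at h
    have : algebraMap F2 F4 (p1 - p2) + algebraMap F2 F4 (q1 - q2) * w = 0 := by
      simp only [map_sub]; linear_combination h
    obtain ⟨h1, h2⟩ := F4_indep w hw _ _ this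
    have := sub_eq_zero.mp h1
    have := sub_eq_zero.mp h2
    simp_all
  have hcard : Nat.card (F2 × F2) = Nat.card F4 := by
    rw [GaloisField.card 2 2 (by norm_num)]
    simp [Nat.card_prod]
  obtain ⟨⟨p, q⟩, hpq⟩ := ((Nat.bijective_iff_injective_and_card f).mpr ⟨hinj, hcard⟩).surjective t
  exact ⟨p, q, hpq⟩

lemma emb_span (ω : R4) (hω : ω ^ 2 + ω + 1 = 0) (r : R4) :
    ∃ b c : R2, emb b + emb c * ω = r := by
  have hw : (fst ω)^2 + fst ω + 1 = 0 := fst_omega ω hω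
  obtain ⟨p, q, hpq⟩ := F4_span _ hw (fst r)
  obtain ⟨p', q', hpq'⟩ := F4_span _ hw (snd r - algebraMap F2 F4 q * snd ω)
  refine ⟨TrivSqZeroExt.inl p + TrivSqZeroExt.inr p',
          TrivSqZeroExt.inl q + TrivSqZeroExt.inr q', TrivSqZeroExt.ext ?_ ?_⟩
  · simpa [emb_fst] using hpq
  · simp [emb_fst, emb_snd, TrivSqZeroExt.snd_mul, smul_eq_mul]
    linear_combination hpq'

lemma psi_mul (ω : R4) (hω : ω ^ 2 + ω + 1 = 0) (a b c d : R2) :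
    (emb a * ω + emb b * (1+ω)) * (emb c * ω + emb d * (1+ω))
      = emb (a*c + a*d + b*c) + emb (a*c + b*d) * ω := by
  simp only [emb_eq, map_add, map_mul]
  set A := embHom a; set B := embHom b; set C := embHom c; set D := embHom d
  linear_combination (A*C+A*D+B*C+B*D) * hω + (-(A*C)*ω - A*C - A*D - B*C) * two_R4

lemma sum_psi {n : ℕ} (ω : R4) (hω : ω ^ 2 + ω + 1 = 0) (a b : (Fin n ⊕ Fin n) → R2) :
    ∑ i, psiInv ω a i * psiInv ω b i
      = emb (∑ i, (a (Sum.inl i) * b (Sum.inl i) + a (Sum.inl i) * b (Sum.inr i)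
            + a (Sum.inr i) * b (Sum.inl i)))
        + emb (∑ i, (a (Sum.inl i) * b (Sum.inl i) + a (Sum.inr i) * b (Sum.inr i))) * ω := by
  rw [emb_eq, map_sum, map_sum, Finset.sum_mul, ← Finset.sum_add_distrib]
  refine Finset.sum_congr rfl fun i _ => ?_
  have := psi_mul ω hω (a (Sum.inl i)) (a (Sum.inr i)) (b (Sum.inl i)) (b (Sum.inr i))
  simpa [psiInv, emb_eq, map_add, map_mul] using this

lemma psiInv_swap (ω : R4) (hω : ω ^ 2 + ω + 1 = 0) {n : ℕ} (y : (Fin n ⊕ Fin n) → R2) :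
    psiInv ω (Sum.elim (fun i => y (Sum.inr i)) (fun i => y (Sum.inl i) + y (Sum.inr i)))
      = ω • psiInv ω y := by
  funext i
  simp only [psiInv, Sum.elim_inl, Sum.elim_inr, Pi.smul_apply, smul_eq_mul,
    emb_eq, map_add]
  set A := embHom (y (Sum.inl i)); set B := embHom (y (Sum.inr i))
  linear_combination (A+B) * hω - ((A+B)*ω^2) * two_R4

lemma psiInv_surj (ω : R4) (hω : ω ^ 2 + ω + 1 = 0) {n : ℕ} (z : Fin n → R4) :
    ∃ y, psiInv ω y = z := by
  have h : ∀ i, ∃ ab : R2 × R2, emb ab.1 * ω + emb ab.2 * (1 + ω) = z i := by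
    intro i
    obtain ⟨b, c, hbc⟩ := emb_span ω hω (z i)
    refine ⟨(c - b, b), ?_⟩
    simp only [emb_eq] at hbc ⊢
    simp only [map_sub]
    linear_combination hbc
  choose f hf using h
  exact ⟨Sum.elim (fun i => (f i).1) (fun i => (f i).2), funext fun i => by
    simpa [psiInv] using hf i⟩

lemma psiInv_add {n : ℕ} (ω : R4) (a b : (Fin n ⊕ Fin n) → R2) :
    psiInv ω (a + b) = psiInv ω a + psiInv ω b := by
  funext i
  simp only [psiInv, Pi.add_apply, emb_eq, map_add]
  ring

lemma psiInv_zero {n : ℕ} (ω : R4) : psiInv ω (0 : (Fin n ⊕ Fin n) → R2) = 0 := by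
  funext i
  simp [psiInv, emb_eq, map_zero]

lemma psiInv_smul {n : ℕ} (ω : R4) (r : R2) (a : (Fin n ⊕ Fin n) → R2) :
    psiInv ω (r • a) = emb r • psiInv ω a := by
  funext i
  simp only [psiInv, Pi.smul_apply, smul_eq_mul, emb_eq, map_mul]
  ring

/-- The Gray map `ψ` preserves orthogonality: if `⟨x, y⟩ = 0` in `F₄ + u F₄` then
`⟨ψ(x), ψ(y)⟩ = 0` in `F₂ + u F₂` (stated via `x = psiInv ω a`, `y = psiInv ω b`,
i.e. `a = ψ(x)`, `b = ψ(y)`).  Consequently, the Gray image `ψ(C) = psiInv ω ⁻¹' C`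
of a self-dual code `C` of length `n` over `F₄ + u F₄` is a self-dual code of length
`2n` over `F₂ + u F₂`. -/
theorem grayPsi_preserves_orthogonality_and_self_dual (n : ℕ)
    (ω : R4) (hω : ω ^ 2 + ω + 1 = 0) :
    (∀ a b : (Fin n ⊕ Fin n) → R2,
      ∑ i, psiInv ω a i * psiInv ω b i = 0 → ∑ j, a j * b j = 0) ∧
    (∀ C : Submodule R4 (Fin n → R4),
      (C : Set (Fin n → R4)) = dualSet (C : Set (Fin n → R4)) →
      ∃ D : Submodule R2 ((Fin n ⊕ Fin n) → R2),
        (D : Set ((Fin n ⊕ Fin n) → R2)) = psiInv ω ⁻¹' (C : Set (Fin n → R4)) ∧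
        (D : Set ((Fin n ⊕ Fin n) → R2)) =
          dualSet (D : Set ((Fin n ⊕ Fin n) → R2))) := by
  have part1 : ∀ a b : (Fin n ⊕ Fin n) → R2,
      ∑ i, psiInv ω a i * psiInv ω b i = 0 → ∑ j, a j * b j = 0 := by
    intro a b h
    rw [sum_psi ω hω] at h
    obtain ⟨-, h2⟩ := R4_indep ω hω _ _ h
    rw [Finset.sum_add_distrib] at h2
    rw [Fintype.sum_sum_type]
    exact h2
  refine ⟨part1, fun C hC => ?_⟩
  set D : Submodule R2 ((Fin n ⊕ Fin n) → R2) :=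
    { carrier := psiInv ω ⁻¹' (C : Set (Fin n → R4))
      add_mem' := by
        intro a b ha hb
        simp only [Set.mem_preimage] at *
        rw [psiInv_add]
        exact C.add_mem ha hb
      zero_mem' := by
        simp only [Set.mem_preimage]
        rw [psiInv_zero]
        exact C.zero_mem
      smul_mem' := by
        intro r a ha
        simp only [Set.mem_preimage] at *
        rw [psiInv_smul]
        exact C.smul_mem _ ha } with hDdef
  have hD : (D : Set ((Fin n ⊕ Fin n) → R2)) = psiInv ω ⁻¹' (C : Set (Fin n → R4)) := rfl
  refine ⟨D, hD, ?_⟩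
  rw [hD]
  ext x
  simp only [dualSet, Set.mem_setOf_eq, Set.mem_preimage]
  constructor
  · intro hx y hy
    refine part1 x y ?_
    rw [hC] at hx
    exact hx (psiInv ω y) hy
  · intro hx
    rw [hC]
    intro z hz
    obtain ⟨y, rfl⟩ := psiInv_surj ω hω z
    have h1 := hx y hz
    have hy' : psiInv ω (Sum.elim (fun i => y (Sum.inr i))
        (fun i => y (Sum.inl i) + y (Sum.inr i))) ∈ (C : Set (Fin n → R4)) := by
      rw [psiInv_swap ω hω]
      exact C.smul_mem ω hz
    have h2 := hx _ hy'
    rw [sum_psi ω hω]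
    rw [Fintype.sum_sum_type] at h1 h2
    simp only [Sum.elim_inl, Sum.elim_inr, mul_add, Finset.sum_add_distrib] at h1 h2 ⊢
    set S1 := ∑ i, x (Sum.inl i) * y (Sum.inl i) with hS1
    set S2a := ∑ i, x (Sum.inl i) * y (Sum.inr i) with hS2a
    set S2b := ∑ i, x (Sum.inr i) * y (Sum.inl i) with hS2b
    set S3 := ∑ i, x (Sum.inr i) * y (Sum.inr i) with hS3
    have e1 : S1 + S2a + S2b = 0 := by linear_combination h1 + h2 - S3 * two_R2
    have e2 : S1 + S3 = 0 := h1
    rw [e1, e2]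
    simp [emb_eq, map_zero]

end
end
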